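/- arXiv:2011.04596 — 4 statements merged into one kernel-verified Lean document; each statement's English description precedes it below -/
import Mathlib

section
/- For every real x > 0 and every s in (0,1), we have x^{1-s} < Γ(x+1)/Γ(x+s) < (x+1)^{1-s}. -/
open Real Set

lemma strictConvexOn_log_Gamma : StrictConvexOn ℝ (Ioi (0:ℝ)) (fun x => Real.log (Real.Gamma x)) := by
  have h1 : ConvexOn ℝ (Ioi (0:ℝ)) (fun x : ℝ => Real.log (Real.Gamma (x + 1))) := by
    have := (Real.convexOn_log_Gamma.comp_affineMap
      (AffineMap.const ℝ ℝ (1:ℝ) + AffineMap.id ℝ ℝ))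
    have h := this.subset (fun y hy => ?_) (convex_Ioi 0)
    · simpa [Function.comp_def, add_comm] using h
    simp only [Set.mem_preimage, AffineMap.coe_add, AffineMap.coe_const, AffineMap.coe_id,
      Pi.add_apply, Function.const_apply, id_eq, Set.mem_Ioi] at *
    linarith
  have h2 : StrictConvexOn ℝ (Ioi (0:ℝ)) (fun x : ℝ => -Real.log x) :=
    strictConcaveOn_log_Ioi.neg
  have h3 := h1.add_strictConvexOn h2
  refine ⟨h3.1, fun a ha b hb hab p q hp hq hpq => ?_⟩
  have key : ∀ y : ℝ, y ∈ Ioi (0:ℝ) → Real.log (Real.Gamma y)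
      = Real.log (Real.Gamma (y + 1)) + -Real.log y := by
    intro y hy
    rw [Real.Gamma_add_one (ne_of_gt hy), Real.log_mul (ne_of_gt hy)
      (ne_of_gt (Real.Gamma_pos_of_pos hy))]
    ring
  have hmem : p • a + q • b ∈ Ioi (0:ℝ) := (convex_Ioi 0) ha hb hp.le hq.le hpq
  show Real.log (Real.Gamma (p • a + q • b)) < p • Real.log (Real.Gamma a) + q • Real.log (Real.Gamma b)
  rw [key a ha, key b hb, key _ hmem]
  have := h3.2 ha hb hab hp hq hpq
  simpa [smul_eq_mul, mul_add] using this

lemma Gamma_strict_log_convex {a b p q : ℝ} (ha : 0 < a) (hb : 0 < b) (hab : a ≠ b)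
    (hp : 0 < p) (hq : 0 < q) (hpq : p + q = 1) :
    Real.Gamma (p * a + q * b) < Real.Gamma a ^ p * Real.Gamma b ^ q := by
  have h := strictConvexOn_log_Gamma.2 (Set.mem_Ioi.2 ha) (Set.mem_Ioi.2 hb) hab hp hq hpq
  have hmem : 0 < p * a + q * b := by positivity
  have hGa := Real.Gamma_pos_of_pos ha
  have hGb := Real.Gamma_pos_of_pos hb
  have hGm := Real.Gamma_pos_of_pos hmem
  simp only [smul_eq_mul] at h
  calc Real.Gamma (p * a + q * b) = Real.exp (Real.log (Real.Gamma (p * a + q * b))) := by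
        rw [Real.exp_log hGm]
    _ < Real.exp (p * Real.log (Real.Gamma a) + q * Real.log (Real.Gamma b)) :=
        Real.exp_lt_exp.2 h
    _ = Real.Gamma a ^ p * Real.Gamma b ^ q := by
        rw [Real.exp_add, Real.rpow_def_of_pos hGa, Real.rpow_def_of_pos hGb,
          mul_comm p, mul_comm q]

theorem stmt_0 (x s : ℝ) (hx : 0 < x) (hs : s ∈ Set.Ioo (0:ℝ) 1) :
    x ^ (1 - s) < Real.Gamma (x + 1) / Real.Gamma (x + s) ∧
      Real.Gamma (x + 1) / Real.Gamma (x + s) < (x + 1) ^ (1 - s) := by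
  obtain ⟨hs0, hs1⟩ := hs
  have hxs : 0 < x + s := by linarith
  have hx1 : 0 < x + 1 := by linarith
  have hGx := Real.Gamma_pos_of_pos hx
  have hGxs := Real.Gamma_pos_of_pos hxs
  have hGx1 := Real.Gamma_pos_of_pos hx1
  have hgadd : Real.Gamma (x + 1) = x * Real.Gamma x := Real.Gamma_add_one hx.ne'
  constructor
  · -- lower bound
    have h := Gamma_strict_log_convex hx hx1 (by linarith) (by linarith : (0:ℝ) < 1 - s) hs0
      (by ring)
    have heq : (1 - s) * x + s * (x + 1) = x + s := by ring
    rw [heq] at h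
    -- Γ(x+s) < Γx^(1-s) * Γ(x+1)^s
    rw [lt_div_iff₀ hGxs]
    calc x ^ (1 - s) * Real.Gamma (x + s)
        < x ^ (1 - s) * (Real.Gamma x ^ (1 - s) * Real.Gamma (x + 1) ^ s) := by
          exact mul_lt_mul_of_pos_left h (Real.rpow_pos_of_pos hx _)
      _ = (x * Real.Gamma x) ^ (1 - s) * Real.Gamma (x + 1) ^ s := by
          rw [Real.mul_rpow hx.le hGx.le, mul_assoc]
      _ = Real.Gamma (x + 1) ^ (1 - s) * Real.Gamma (x + 1) ^ s := by rw [← hgadd]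
      _ = Real.Gamma (x + 1) := by
          rw [← Real.rpow_add hGx1]; norm_num
  · -- upper bound
    have h := Gamma_strict_log_convex hxs (by linarith : (0:ℝ) < x + s + 1)
      (by linarith) hs0 (by linarith : (0:ℝ) < 1 - s) (by ring)
    have heq : s * (x + s) + (1 - s) * (x + s + 1) = x + 1 := by ring
    rw [heq] at h
    have hgadd2 : Real.Gamma (x + s + 1) = (x + s) * Real.Gamma (x + s) :=
      Real.Gamma_add_one hxs.ne'
    rw [div_lt_iff₀ hGxs]
    calc Real.Gamma (x + 1)
        < Real.Gamma (x + s) ^ s * Real.Gamma (x + s + 1) ^ (1 - s) := h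
      _ = Real.Gamma (x + s) ^ s * ((x + s) ^ (1 - s) * Real.Gamma (x + s) ^ (1 - s)) := by
          rw [hgadd2, Real.mul_rpow hxs.le hGxs.le]
      _ = (x + s) ^ (1 - s) * Real.Gamma (x + s) := by
          rw [show Real.Gamma (x+s) ^ s * ((x+s) ^ (1-s) * Real.Gamma (x+s) ^ (1-s))
            = (x+s) ^ (1-s) * (Real.Gamma (x+s) ^ s * Real.Gamma (x+s) ^ (1-s)) by ring,
            ← Real.rpow_add hGxs]
          norm_num
      _ < (x + 1) ^ (1 - s) * Real.Gamma (x + s) := by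
          apply mul_lt_mul_of_pos_right _ hGxs
          exact Real.rpow_lt_rpow hxs.le (by linarith) (by linarith)
end

section
/- Let (Ω,ρ) be a compact path-connected metric space with diameter π. Then for each δ ∈ (0,π) there exists a finite set Λ = {a_1, …, a_M} ⊂ Ω with M > 1 such that Ω is covered by the open balls B_δ(a_j), j = 1,…,M, and for each j = 2,…,M the distance from a_j to the set {a_1,…,a_{j-1}} equals exactly δ. -/
/-!
Choose points greedily: once `a₁, …, aₖ` are chosen and some point `z` lies outside every ball
`B_δ(aᵢ)`, the continuous function `dist(·, {a₁, …, aₖ})` vanishes at `a₁` and is at least `δ`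
at `z`, so by connectedness it takes the value `δ` at some `aₖ₊₁`. The chosen points are pairwise
at distance at least `δ`, so compactness bounds their number and the process must stop, which
happens only when the balls cover `Ω`. Since `diam Ω > δ`, the ball around a suitable first
point does not cover, so at least two points are chosen.
-/

open Metric Set

open scoped NNReal

theorem Metric.packingNumber_ne_top_of_totallyBounded {X : Type*} [PseudoEMetricSpace X]
    {s : Set X} {ε : ℝ≥0} (hε : ε ≠ 0) (hs : TotallyBounded s) : packingNumber ε s ≠ ⊤ := by
  obtain ⟨N, -, hN_fin, hN⟩ := exists_finite_isCover_of_totallyBounded (ε := ε / 2) (by simpa) hs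
  refine ne_top_of_le_ne_top hN_fin.encard_lt_top.ne ?_
  calc packingNumber ε s = packingNumber (2 * (ε / 2)) s := by rw [mul_div_cancel₀ _ two_ne_zero]
    _ ≤ externalCoveringNumber (ε / 2) s := packingNumber_two_mul_le_externalCoveringNumber _ _
    _ ≤ N.encard := hN.externalCoveringNumber_le_encard

theorem exists_card_le_of_pairwise_le_dist {X : Type*} [MetricSpace X]
    (hX : TotallyBounded (univ : Set X)) {δ : ℝ} (hδ : 0 < δ) :
    ∃ N : ℕ, ∀ (n : ℕ) (a : Fin n → X), Pairwise (fun i j ↦ δ ≤ dist (a i) (a j)) → n ≤ N := by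
  set ε : ℝ≥0 := (δ / 2).toNNReal
  have hε : ε ≠ 0 := by simpa [ε] using hδ
  refine ⟨(packingNumber ε (univ : Set X)).toNat, fun n a ha ↦ ?_⟩
  have ha_inj : a.Injective := fun i j hij ↦ by
    by_contra hne
    have h : δ ≤ dist (a i) (a j) := ha hne
    rw [hij, dist_self] at h
    linarith
  have ha_sep : IsSeparated ε (range a) := by
    rintro _ ⟨i, rfl⟩ _ ⟨j, rfl⟩ hij
    have h : δ ≤ dist (a i) (a j) := ha fun h ↦ hij (congrArg a h)
    rw [edist_dist]
    exact (ENNReal.ofReal_lt_ofReal_iff (p := δ / 2) (by linarith)).2 (by linarith)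
  have h := ha_inj.encard_range.trans (ha_sep.encard_le_packingNumber (subset_univ _))
  rw [ENat.card_eq_coe_fintype_card, Fintype.card_fin] at h
  rwa [← ENat.natCast_le_natCast,
    ENat.natCast_toNat (packingNumber_ne_top_of_totallyBounded hε hX)]

theorem exists_infDist_eq {X : Type*} [MetricSpace X] [PreconnectedSpace X] {s : Set X}
    {x z : X} {δ : ℝ} (hx : x ∈ s) (hδ : 0 ≤ δ) (hz : δ ≤ infDist z s) :
    ∃ w, infDist w s = δ :=
  intermediate_value_univ x z (continuous_infDist_pt s) ⟨(infDist_zero_of_mem hx).symm ▸ hδ, hz⟩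

section GreedyChain

variable {Ω : Type*} [MetricSpace Ω] {δ : ℝ} {n : ℕ}

def IsGreedyChain (δ : ℝ) (a : Fin n → Ω) : Prop :=
  ∀ j : Fin n, 0 < (j : ℕ) → infDist (a j) (a '' Iio j) = δ

theorem isGreedyChain_one (a : Fin 1 → Ω) : IsGreedyChain δ a := fun j hj ↦
  absurd hj (by omega)

theorem IsGreedyChain.le_dist {a : Fin n → Ω} (ha : IsGreedyChain δ a) {i j : Fin n}
    (hij : i < j) : δ ≤ dist (a j) (a i) :=
  ha j (by omega) ▸ infDist_le_dist_of_mem (mem_image_of_mem a hij)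

theorem IsGreedyChain.pairwise_le_dist {a : Fin n → Ω} (ha : IsGreedyChain δ a) :
    Pairwise fun i j ↦ δ ≤ dist (a i) (a j) := fun i j hij ↦ by
  rcases hij.lt_or_gt with h | h
  · exact dist_comm (a i) (a j) ▸ ha.le_dist h
  · exact ha.le_dist h

theorem IsGreedyChain.snoc {a : Fin n → Ω} (ha : IsGreedyChain δ a) {w : Ω}
    (hw : infDist w (range a) = δ) : IsGreedyChain δ (Fin.snoc a w : Fin (n + 1) → Ω) := by
  intro j hj
  induction j using Fin.lastCases with
  | last =>
    have hIio : Iio (Fin.last n) = range Fin.castSucc := by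
      ext i; simp [Fin.range_castSucc, Fin.lt_def]
    rwa [Fin.snoc_last, hIio, ← range_comp, Fin.snoc_comp_castSucc]
  | cast i =>
    rw [Fin.snoc_castSucc, ← Fin.image_castSucc_Iio, ← image_comp, Fin.snoc_comp_castSucc]
    exact ha i hj

theorem IsGreedyChain.exists_snoc [PreconnectedSpace Ω] {a : Fin n → Ω} (ha : IsGreedyChain δ a)
    (hn : 0 < n) (hδ : 0 ≤ δ) (hcov : ⋃ i, ball (a i) δ ≠ univ) :
    ∃ w, IsGreedyChain δ (Fin.snoc a w : Fin (n + 1) → Ω) := by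
  obtain ⟨z, hz⟩ := (ne_univ_iff_exists_notMem _).1 hcov
  have hz_far : δ ≤ infDist z (range a) := by
    refine (le_infDist (range_nonempty_iff_nonempty.2 ⟨⟨0, hn⟩⟩)).2 ?_
    rintro _ ⟨i, rfl⟩
    simpa using fun h ↦ hz (mem_iUnion.2 ⟨i, h⟩)
  obtain ⟨w, hw⟩ := exists_infDist_eq (mem_range_self ⟨0, hn⟩) hδ hz_far
  exact ⟨w, ha.snoc hw⟩

theorem IsGreedyChain.exists_iUnion_ball_eq_univ [CompactSpace Ω] [PreconnectedSpace Ω]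
    {a : Fin n → Ω} (ha : IsGreedyChain δ a) (hn : 0 < n) (hδ : 0 < δ) :
    ∃ m, n ≤ m ∧ ∃ b : Fin m → Ω, IsGreedyChain δ b ∧ ⋃ i, ball (b i) δ = univ := by
  obtain ⟨N, hN⟩ := exists_card_le_of_pairwise_le_dist (isCompact_univ (X := Ω)).totallyBounded hδ
  set lengths := {m | n ≤ m ∧ ∃ b : Fin m → Ω, IsGreedyChain δ b}
  have hbdd : BddAbove lengths := ⟨N, fun m ⟨_, b, hb⟩ ↦ hN m b hb.pairwise_le_dist⟩
  obtain ⟨hnm, b, hb⟩ : sSup lengths ∈ lengths := Nat.sSup_mem ⟨n, le_rfl, a, ha⟩ hbdd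
  refine ⟨_, hnm, b, hb, ?_⟩
  by_contra hcov
  obtain ⟨w, hw⟩ := hb.exists_snoc (hn.trans_le hnm) hδ.le hcov
  have := le_csSup hbdd ⟨by omega, _, hw⟩
  omega

end GreedyChain

theorem stmt_5 (Ω : Type*) [MetricSpace Ω] [CompactSpace Ω] [PathConnectedSpace Ω]
    (hdiam : Metric.diam (Set.univ : Set Ω) = Real.pi)
    (δ : ℝ) (hδ : δ ∈ Set.Ioo 0 Real.pi) :
    ∃ (M : ℕ), 1 < M ∧ ∃ a : Fin M → Ω,
      (⋃ j, Metric.ball (a j) δ) = Set.univ ∧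
      ∀ j : Fin M, 0 < (j : ℕ) →
        Metric.infDist (a j) {x | ∃ i : Fin M, (i : ℕ) < (j : ℕ) ∧ a i = x} = δ := by
  obtain ⟨hδ_pos, hδ_lt⟩ := hδ
  obtain ⟨x, y, hxy⟩ : ∃ x y : Ω, δ < dist x y := by
    by_contra! h
    linarith [diam_le_of_forall_dist_le (s := univ) hδ_pos.le fun x _ y _ ↦ h x y]
  have hy : ⋃ _ : Fin 1, ball x δ ≠ univ :=
    (ne_univ_iff_exists_notMem _).2 ⟨y, by simpa [dist_comm] using hxy.le⟩
  obtain ⟨w, hw⟩ := (isGreedyChain_one (δ := δ) fun _ ↦ x).exists_snoc one_pos hδ_pos.le hy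
  obtain ⟨M, hM, a, ha, hcov⟩ := hw.exists_iUnion_ball_eq_univ two_pos hδ_pos
  exact ⟨M, hM, a, hcov, ha⟩
end

section
/- Let X be a real locally convex topological vector space, Q a compact Hausdorff space, f: Q → X continuous, and suppose the closed convex hull K of f(Q) is compact. Then for any Borel probability measure μ on Q, the Pettis integral y = ∫_Q f dμ exists (i.e., there is y ∈ X with Λy = ∫_Q Λ(f(x)) dμ(x) for all continuous linear functionals Λ), and y ∈ K. -/
/-!
For finitely many functionals `Λ₁, …, Λₙ`, the map `L = (Λ₁, …, Λₙ) : X → ℝⁿ` sends `f` to an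
integrable function whose Bochner integral lies in the closed convex hull of its range, hence in
the compact set `L(K)`; so some `y ∈ K` has `Λᵢ y = ∫ Λᵢ ∘ f dμ` for all `i`. The sets of such `y`
are closed and have the finite intersection property in the compact set `K`.
-/

open MeasureTheory Set

section Pettis

variable {X : Type*} [AddCommGroup X] [Module ℝ X] [TopologicalSpace X]
  {Q : Type*} [MeasurableSpace Q] {μ : Measure Q} [IsProbabilityMeasure μ] {f : Q → X}

theorem integral_mem_closure_convexHull_range {E : Type*} [NormedAddCommGroup E]
    [NormedSpace ℝ E] [CompleteSpace E] {g : Q → E} (hg : Integrable g μ) :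
    ∫ x, g x ∂μ ∈ closure (convexHull ℝ (range g)) :=
  (convex_convexHull ℝ _).closure.integral_mem isClosed_closure
    (.of_forall fun x => subset_closure (subset_convexHull ℝ _ (mem_range_self x))) hg

theorem exists_mem_closure_convexHull_forall_mem_finset_eq_integral
    (hint : ∀ Λ : X →L[ℝ] ℝ, Integrable (fun x => Λ (f x)) μ)
    (hK : IsCompact (closure (convexHull ℝ (range f)))) (u : Finset (X →L[ℝ] ℝ)) :
    ∃ y ∈ closure (convexHull ℝ (range f)), ∀ Λ ∈ u, Λ y = ∫ x, Λ (f x) ∂μ := by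
  set L : X →L[ℝ] (u → ℝ) := ContinuousLinearMap.pi fun Λ => Λ.1
  have hLf_eval : ∀ Λ : u, Integrable (fun x => L (f x) Λ) μ := fun Λ => hint Λ.1
  have hLf : Integrable (fun x => L (f x)) μ := Integrable.of_eval hLf_eval
  have hLK : closure (convexHull ℝ (range (L ∘ f))) ⊆ L '' closure (convexHull ℝ (range f)) := by
    refine (hK.image L.continuous).isClosed.closure_subset_iff.2 ?_
    rw [range_comp]
    exact (L.toLinearMap.image_convexHull _).symm.subset.trans (image_mono subset_closure)
  obtain ⟨y, hyK, hy⟩ := hLK (integral_mem_closure_convexHull_range hLf)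
  refine ⟨y, hyK, fun Λ hΛ => ?_⟩
  calc Λ y = L y ⟨Λ, hΛ⟩ := rfl
    _ = (∫ x, L (f x) ∂μ) ⟨Λ, hΛ⟩ := congrFun hy _
    _ = ∫ x, Λ (f x) ∂μ := eval_integral hLf_eval _

theorem exists_mem_closure_convexHull_forall_eq_integral
    (hint : ∀ Λ : X →L[ℝ] ℝ, Integrable (fun x => Λ (f x)) μ)
    (hK : IsCompact (closure (convexHull ℝ (range f)))) :
    ∃ y ∈ closure (convexHull ℝ (range f)), ∀ Λ : X →L[ℝ] ℝ, Λ y = ∫ x, Λ (f x) ∂μ := by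
  obtain ⟨y, hyK, hy⟩ := hK.inter_iInter_nonempty
    (fun Λ : X →L[ℝ] ℝ => {y | Λ y = ∫ x, Λ (f x) ∂μ})
    (fun Λ => isClosed_eq Λ.continuous continuous_const) fun u => by
      simpa only [Set.Nonempty, mem_inter_iff, mem_iInter₂, mem_ofPred_eq]
        using exists_mem_closure_convexHull_forall_mem_finset_eq_integral hint hK u
  exact ⟨y, hyK, mem_iInter.1 hy⟩

end Pettis

theorem stmt_12_general (X : Type*) [AddCommGroup X] [Module ℝ X] [TopologicalSpace X]
    (Q : Type*) [TopologicalSpace Q] [CompactSpace Q]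
    [MeasurableSpace Q] [BorelSpace Q]
    (f : Q → X) (hf : Continuous f)
    (hK : IsCompact (closure (convexHull ℝ (Set.range f))))
    (μ : Measure Q) [IsProbabilityMeasure μ] :
    ∃ y ∈ closure (convexHull ℝ (Set.range f)),
      ∀ Λ : X →L[ℝ] ℝ, Integrable (fun x => Λ (f x)) μ ∧ Λ y = ∫ x, Λ (f x) ∂μ := by
  have hint (Λ : X →L[ℝ] ℝ) : Integrable (fun x => Λ (f x)) μ :=
    (Λ.continuous.comp hf).integrable_of_hasCompactSupport (.of_compactSpace _)
  obtain ⟨y, hyK, hy⟩ := exists_mem_closure_convexHull_forall_eq_integral hint hK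
  exact ⟨y, hyK, fun Λ => ⟨hint Λ, hy Λ⟩⟩

theorem stmt_12 (X : Type*) [AddCommGroup X] [Module ℝ X] [TopologicalSpace X]
    [IsTopologicalAddGroup X] [ContinuousSMul ℝ X] [LocallyConvexSpace ℝ X]
    (Q : Type*) [TopologicalSpace Q] [CompactSpace Q] [T2Space Q]
    [MeasurableSpace Q] [BorelSpace Q]
    (f : Q → X) (hf : Continuous f)
    (hK : IsCompact (closure (convexHull ℝ (Set.range f))))
    (μ : Measure Q) [IsProbabilityMeasure μ] :
    ∃ y ∈ closure (convexHull ℝ (Set.range f)),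
      ∀ Λ : X →L[ℝ] ℝ, Integrable (fun x => Λ (f x)) μ ∧ Λ y = ∫ x, Λ (f x) ∂μ :=
  stmt_12_general X Q f hf hK μ
end

section
/- Let (X,‖·‖) be a finite-dimensional real normed space. Then there is a constant N(X) depending only on X such that: for every nonempty set E ⊂ X and every assignment x ↦ r(x) > 0 with sup_{x∈E} r(x) < ∞, there exists a subfamily of the closed balls {B_{r(x)}[x] : x ∈ E} covering E which can be split into at most N(X) subfamilies, each consisting of pairwise disjoint balls. -/
theorem stmt_14 (X : Type*) [NormedAddCommGroup X] [NormedSpace ℝ X]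
    [FiniteDimensional ℝ X] :
    ∃ N : ℕ, ∀ (E : Set X), E.Nonempty → ∀ r : X → ℝ,
      (∀ x ∈ E, 0 < r x) → (∃ R : ℝ, ∀ x ∈ E, r x ≤ R) →
      ∃ t : Fin N → Set X,
        (∀ i, t i ⊆ E) ∧
        (E ⊆ ⋃ i, ⋃ x ∈ t i, Metric.closedBall x (r x)) ∧
        (∀ i, (t i).PairwiseDisjoint fun x => Metric.closedBall x (r x)) := by
  obtain ⟨N, τ, hτ, hN⟩ := HasBesicovitchCovering.no_satelliteConfig (α := X)
  refine ⟨N, fun E hE r hr ⟨R, hR⟩ => ?_⟩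
  let q : Besicovitch.BallPackage E X :=
    { c := Subtype.val
      r := fun x => r x
      rpos := fun b => hr b b.2
      r_bound := R
      r_le := fun b => hR b b.2 }
  obtain ⟨s, hs, hs'⟩ := Besicovitch.exist_disjoint_covering_families hτ hN q
  refine ⟨fun i => Subtype.val '' s i, fun i => ?_, fun x hx => ?_, fun i => ?_⟩
  · exact Set.image_subset_iff.2 fun b _ => b.2
  · have : x ∈ Set.range q.c := ⟨⟨x, hx⟩, rfl⟩
    have h2 := hs' this
    simp only [Set.mem_iUnion] at h2 ⊢
    obtain ⟨i, b, hb, hxb⟩ := h2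
    exact ⟨i, b, ⟨b, hb, rfl⟩, Metric.ball_subset_closedBall hxb⟩
  · rintro _ ⟨a, ha, rfl⟩ _ ⟨b, hb, rfl⟩ hab
    exact hs i ha hb (fun h => hab (congrArg Subtype.val h))
end
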